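/- Let U be a finite set of pairwise distinct unit vectors in ℝ² with pos(U) = ℝ², and let u ∈ U_□. Then every cone-volume vector γ ∈ C_cv(U) satisfies γ_u ≤ 1/2, where γ_u is the entry of γ corresponding to u. -/

import Mathlib

open MeasureTheory

noncomputable section

abbrev V2 : Type := EuclideanSpace ℝ (Fin 2)

def pos {E : Type*} [AddCommMonoid E] [Module ℝ E] (M : Set E) : Set E :=
  {x | ∃ (s : Finset E) (c : E → ℝ),
    (↑s : Set E) ⊆ M ∧ (∀ v, 0 ≤ c v) ∧ x = ∑ v ∈ s, c v • v}

/-- `P(U,b)`. -/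
def polyP {m : ℕ} (u : Fin m → V2) (b : Fin m → ℝ) : Set V2 :=
  {x | ∀ i, (inner ℝ (u i) x : ℝ) ≤ b i}

/-- `Fᵢ(b)`. -/
def faceF {m : ℕ} (u : Fin m → V2) (b : Fin m → ℝ) (i : Fin m) : Set V2 :=
  {x ∈ polyP u b | (inner ℝ (u i) x : ℝ) = b i}

/-- Entry `i` is the area of `conv({0} ∪ Fᵢ(b))`, i.e. the paper's `(1/2) bᵢ · length(Fᵢ(b))`. -/
def cv {m : ℕ} (u : Fin m → V2) (b : Fin m → ℝ) : Fin m → ℝ :=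
  fun i => (volume (convexHull ℝ (insert 0 (faceF u b i)))).toReal

/-- `C_cv(U)`. -/
def Ccv {m : ℕ} (u : Fin m → V2) : Set (Fin m → ℝ) :=
  {g | ∃ b : Fin m → ℝ, (∀ i, 0 ≤ b i) ∧
    (volume (polyP u b)).toReal = 1 ∧ g = cv u b}

/-- `P_scc(U)`. -/
def Pscc {m : ℕ} (u : Fin m → V2) : Set (Fin m → ℝ) :=
  convexHull ℝ
    {x | ∃ i j, LinearIndependent ℝ ![u i, u j] ∧
      x = (1 / 2 : ℝ) • (Pi.single i 1 + Pi.single j 1)}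

/-- The indices of `U_Δ`. -/
def DeltaIdx {m : ℕ} (u : Fin m → V2) : Set (Fin m) :=
  {i | ∃ j k, pos {u i, u j, u k} = Set.univ}

/-- The indices of `U_□`. -/
def SqIdx {m : ℕ} (u : Fin m → V2) : Set (Fin m) :=
  {i | ¬ ∃ j k, pos {u i, u j, u k} = Set.univ}

/-- The indices of `U_{□,uᵢ}`. -/
def SqAdj {m : ℕ} (u : Fin m → V2) (i : Fin m) : Set (Fin m) :=
  {k | ∃ l, pos {u i, -u i, u k, u l} = Set.univ}

open Set
open scoped RealInnerProductSpace NNReal Pointwise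

/-!
Take coordinates `(x₁, x₂)` with `u i = (1, 0)`, so that `P = P(U,b)` lies in `x₁ ≤ b i` and
`Fᵢ = Fᵢ(b)` is its slice at `x₁ = b i`. Since `u i ∈ U_□`, no `u j` below the `x₁`-axis and
`u k` above it positively span `ℝ²` together with `u i`; this forces the slopes of the `u k` to be
ordered so that some direction `v` has `⟪u i, v⟫ = 1` and `⟪u k, v⟫ ≥ 0` for every `u k` that is
not a negative multiple of `u i`. Then `Fᵢ - d • v ⊆ P` for `0 ≤ d ≤ b i`, so every slice of `P`
at `0 ≤ x₁ ≤ b i` is at least as long as `Fᵢ`, while the slice of the cone `conv({0} ∪ Fᵢ)` is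
`(x₁ / b i) • Fᵢ`. Integrating over `x₁` gives `vol P ≥ b i · |Fᵢ| = 2 vol(conv({0} ∪ Fᵢ))`.
-/

lemma span_nnreal_subset_pos {E : Type*} [AddCommGroup E] [Module ℝ E] (M : Set E) :
    (Submodule.span ℝ≥0 M : Set E) ⊆ pos M := by
  intro x hx
  obtain ⟨f, t, hts, -, rfl⟩ := Submodule.mem_span_iff_exists_finset_subset.1 hx
  exact ⟨t, fun v => f v, hts, fun v => (f v).2, rfl⟩

lemma smul_mem_span_nnreal {E : Type*} [AddCommGroup E] [Module ℝ E] {M : Set E} {x : E}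
    (hx : x ∈ M) {r : ℝ} (hr : 0 ≤ r) : r • x ∈ Submodule.span ℝ≥0 M :=
  Submodule.smul_mem _ (⟨r, hr⟩ : ℝ≥0) (Submodule.subset_span hx)

lemma pos_eq_univ_of_add_smul_add_smul_eq_zero {E : Type*} [AddCommGroup E] [Module ℝ E]
    {x y z : E} {l m : ℝ} (hl : 0 < l) (hm : 0 ≤ m) (hxyz : x + l • y + m • z = 0)
    (hspan : Submodule.span ℝ {x, y} = ⊤) : pos {x, y, z} = univ := by
  refine eq_univ_of_forall fun w => span_nnreal_subset_pos _ ?_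
  obtain ⟨p, q, rfl⟩ := Submodule.mem_span_pair.1 (hspan ▸ Submodule.mem_top : w ∈ _)
  obtain ⟨T, hT, hp, hq⟩ : ∃ T : ℝ, 0 ≤ T ∧ 0 ≤ p + T ∧ 0 ≤ q + T * l := by
    refine ⟨|p| + |q| / l, by positivity, ?_, ?_⟩
    · linarith [neg_abs_le p, div_nonneg (abs_nonneg q) hl.le]
    · rw [add_mul, div_mul_cancel₀ _ hl.ne']
      nlinarith [neg_abs_le q, abs_nonneg p]
  have hw : p • x + q • y = (p + T) • x + (q + T * l) • y + (T * m) • z := by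
    rw [show (p + T) • x + (q + T * l) • y + (T * m) • z
        = p • x + q • y + T • (x + l • y + m • z) by module, hxyz, smul_zero, add_zero]
  rw [hw]
  refine add_mem (add_mem ?_ ?_) ?_
  · exact smul_mem_span_nnreal (by simp) hp
  · exact smul_mem_span_nnreal (by simp) hq
  · exact smul_mem_span_nnreal (by simp) (mul_nonneg hT hm)

lemma Set.Finite.exists_between_of_forall_le {α : Type*} [ConditionallyCompleteLattice α]
    [Nonempty α] {s t : Set α} (hs : s.Finite) (ht : t.Finite) (hst : ∀ x ∈ s, ∀ y ∈ t, x ≤ y) :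
    (upperBounds s ∩ lowerBounds t).Nonempty := by
  rcases s.eq_empty_or_nonempty with rfl | hs'
  · obtain ⟨c, hc⟩ := ht.bddBelow
    exact ⟨c, by simp, hc⟩
  rcases t.eq_empty_or_nonempty with rfl | ht'
  · obtain ⟨c, hc⟩ := hs.bddAbove
    exact ⟨c, hc, by simp⟩
  exact _root_.exists_between_of_forall_le hs' ht' hst

lemma exists_forall_mul_le {ι : Type*} [Finite ι] {a s : ι → ℝ}
    (h : ∀ j k, s j < 0 → 0 < s k → a k * s j ≤ a j * s k) :
    ∃ c, ∀ k, s k ≠ 0 → s k * c ≤ a k := by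
  obtain ⟨c, hlo, hhi⟩ := Set.Finite.exists_between_of_forall_le
    ((toFinite {j | s j < 0}).image fun j => a j / s j)
    ((toFinite {k | 0 < s k}).image fun k => a k / s k) <| by
      rintro _ ⟨j, hj, rfl⟩ _ ⟨k, hk, rfl⟩
      rw [div_le_iff_of_neg hj, div_mul_eq_mul_div, div_le_iff₀ hk]
      exact h j k hj hk
  refine ⟨c, fun k hk => ?_⟩
  rcases hk.lt_or_gt with hk | hk
  · rw [mul_comm, ← div_le_iff_of_neg hk]
    exact hlo ⟨k, hk, rfl⟩
  · rw [mul_comm, ← le_div_iff₀ hk]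
    exact hhi ⟨k, hk, rfl⟩

lemma ofReal_mul_volume_le_of_forall_mem {A : Set (ℝ × ℝ)} (hA : MeasurableSet A) {S : Set ℝ}
    {b : ℝ} (f : ℝ → ℝ) (h : ∀ t ∈ Icc 0 b, ∀ y ∈ S, (t, y + f t) ∈ A) :
    ENNReal.ofReal b * volume S ≤ volume A := by
  rw [Measure.volume_eq_prod, Measure.prod_apply hA]
  calc ENNReal.ofReal b * volume S = ∫⁻ _ in Icc 0 b, volume S := by
        rw [setLIntegral_const, Real.volume_Icc, sub_zero, mul_comm]
    _ ≤ ∫⁻ t in Icc 0 b, volume (Prod.mk t ⁻¹' A) := by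
        refine setLIntegral_mono' measurableSet_Icc fun t ht => ?_
        calc volume S ≤ volume ((· + f t) ⁻¹' (Prod.mk t ⁻¹' A)) :=
              measure_mono fun y hy => h t ht y hy
          _ = volume (Prod.mk t ⁻¹' A) := measure_preimage_add_right _ _ _
    _ ≤ ∫⁻ t, volume (Prod.mk t ⁻¹' A) := setLIntegral_le_lintegral _ _

lemma volume_le_lintegral_volume_slice {K : Set (ℝ × ℝ)} (hK : NullMeasurableSet K) :
    volume K ≤ ∫⁻ t, volume (Prod.mk t ⁻¹' K) := by
  obtain ⟨K', hK'K, hK', hK'ae⟩ := hK.exists_measurable_subset_ae_eq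
  rw [← measure_congr hK'ae, Measure.volume_eq_prod, Measure.prod_apply hK']
  exact lintegral_mono fun t => measure_mono (preimage_mono hK'K)

lemma setLIntegral_Icc_zero_ofReal_div {b : ℝ} (hb : 0 < b) :
    ∫⁻ t in Icc 0 b, ENNReal.ofReal (t / b) = ENNReal.ofReal (b / 2) := by
  rw [← ofReal_integral_eq_lintegral_ofReal
    (by fun_prop : Continuous fun t : ℝ => t / b).integrableOn_Icc
    ((ae_restrict_mem measurableSet_Icc).mono fun t ht => div_nonneg ht.1 hb.le),
    integral_Icc_eq_integral_Ioc, ← intervalIntegral.integral_of_le hb.le,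
    intervalIntegral.integral_div, integral_id]
  congr 1
  field_simp
  ring

lemma mem_Icc_and_mem_smul_of_mem_convexHull_insert_zero {S : Set ℝ} (hS : Convex ℝ S)
    (hSne : S.Nonempty) {b : ℝ} (hb : 0 < b) {t y : ℝ}
    (hty : (t, y) ∈ convexHull ℝ (insert 0 ({b} ×ˢ S))) : t ∈ Icc 0 b ∧ y ∈ (t / b) • S := by
  rw [convexHull_insert ((singleton_nonempty b).prod hSne),
    ((convex_singleton b).prod hS).convexHull_eq, convexJoin_singleton_left, mem_iUnion₂] at hty
  obtain ⟨⟨b', z⟩, ⟨hb', hz⟩, α, β, hα, hβ, hαβ, hsum⟩ := hty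
  have hb' : b' = b := hb'
  subst b'
  simp only [smul_zero, zero_add, Prod.smul_mk, smul_eq_mul, Prod.mk.injEq] at hsum
  obtain ⟨rfl, rfl⟩ := hsum
  refine ⟨⟨by positivity, by nlinarith⟩, ?_⟩
  rw [mul_div_cancel_right₀ _ hb.ne']
  exact smul_mem_smul_set hz

lemma volume_slice_convexHull_insert_zero_le {S : Set ℝ} (hS : Convex ℝ S) (hSne : S.Nonempty)
    {b : ℝ} (hb : 0 < b) (t : ℝ) :
    volume (Prod.mk t ⁻¹' convexHull ℝ (insert 0 ({b} ×ˢ S))) ≤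
      (Icc 0 b).indicator (fun t => ENNReal.ofReal (t / b) * volume S) t := by
  have hmem := fun y (hy : (t, y) ∈ convexHull ℝ (insert 0 ({b} ×ˢ S))) =>
    mem_Icc_and_mem_smul_of_mem_convexHull_insert_zero hS hSne hb hy
  by_cases ht : t ∈ Icc 0 b
  · rw [indicator_of_mem ht]
    calc volume (Prod.mk t ⁻¹' convexHull ℝ (insert 0 ({b} ×ˢ S))) ≤ volume ((t / b) • S) :=
          measure_mono fun y hy => (hmem y hy).2
      _ = ENNReal.ofReal (t / b) * volume S := by
          rw [Measure.addHaar_smul, Module.finrank_self, pow_one,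
            abs_of_nonneg (div_nonneg ht.1 hb.le)]
  · have hempty : Prod.mk t ⁻¹' convexHull ℝ (insert 0 ({b} ×ˢ S)) = ∅ :=
      eq_empty_of_forall_notMem fun y hy => ht (hmem y hy).1
    rw [indicator_of_notMem ht, hempty, measure_empty]

lemma two_mul_volume_convexHull_insert_zero_le {S : Set ℝ} (hS : Convex ℝ S) {b : ℝ}
    (hb : 0 ≤ b) :
    2 * volume (convexHull ℝ (insert 0 ({b} ×ˢ S))) ≤ ENNReal.ofReal b * volume S := by
  set K := convexHull ℝ (insert 0 ({b} ×ˢ S))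
  by_cases hdeg : b = 0 ∨ S = ∅
  · have hK : K ⊆ {0} ×ˢ univ := by
      refine convexHull_min (insert_subset (by simp) ?_) ((convex_singleton 0).prod convex_univ)
      rcases hdeg with rfl | rfl
      exacts [prod_mono subset_rfl (subset_univ _), by simp]
    have hK0 : volume K = 0 :=
      measure_mono_null hK (by rw [Measure.volume_eq_prod, Measure.prod_prod]; simp)
    simp [hK0]
  push Not at hdeg
  obtain ⟨hb0, hSne⟩ := hdeg
  replace hb : 0 < b := hb.lt_of_ne' hb0
  calc 2 * volume K
      ≤ 2 * ∫⁻ t, (Icc 0 b).indicator (fun t => ENNReal.ofReal (t / b) * volume S) t := by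
        gcongr
        exact (volume_le_lintegral_volume_slice
          ((convex_convexHull ℝ _).nullMeasurableSet (μ := volume))).trans
          (lintegral_mono (volume_slice_convexHull_insert_zero_le hS hSne hb))
    _ = ENNReal.ofReal b * volume S := by
        rw [lintegral_indicator measurableSet_Icc, lintegral_mul_const _ (by fun_prop),
          setLIntegral_Icc_zero_ofReal_div hb, ← mul_assoc, ← ENNReal.ofReal_ofNat 2,
          ← ENNReal.ofReal_mul (by norm_num)]
        congr 2
        ring

lemma two_mul_volume_convexHull_insert_zero_le_of_forall_sub_smul_mem {A : Set (ℝ × ℝ)}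
    (hA : MeasurableSet A) (hAc : Convex ℝ A) {b : ℝ} (hb : 0 ≤ b) (w : ℝ)
    (h : ∀ z ∈ A, z.1 = b → ∀ d ∈ Icc 0 b, z - d • (1, w) ∈ A) :
    2 * volume (convexHull ℝ (insert 0 {z ∈ A | z.1 = b})) ≤ volume A := by
  set S := Prod.mk b ⁻¹' A
  have hface : {z ∈ A | z.1 = b} = {b} ×ˢ S := by
    ext ⟨t, y⟩
    simp only [mem_sep_iff, mem_prod, mem_singleton_iff, mem_preimage, S]
    constructor
    · rintro ⟨hA, rfl⟩; exact ⟨rfl, hA⟩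
    · rintro ⟨rfl, hA⟩; exact ⟨hA, rfl⟩
  have hS : Convex ℝ S := fun y₁ hy₁ y₂ hy₂ α β hα hβ hαβ => by
    show (b, α • y₁ + β • y₂) ∈ A
    convert hAc hy₁ hy₂ hα hβ hαβ using 1
    ext <;> simp [← add_mul, hαβ]
  calc 2 * volume (convexHull ℝ (insert 0 {z ∈ A | z.1 = b}))
      ≤ ENNReal.ofReal b * volume S := hface ▸ two_mul_volume_convexHull_insert_zero_le hS hb
    _ ≤ volume A := by
      refine ofReal_mul_volume_le_of_forall_mem hA (fun t => (t - b) * w) fun t ht y hy => ?_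
      convert h (b, y) hy rfl (b - t) ⟨by linarith [ht.2], by linarith [ht.1]⟩ using 1
      ext
      · simp
      · simp; ring

section Coordinates

variable {E : Type*} [NormedAddCommGroup E] [InnerProductSpace ℝ E]

lemma exists_orthonormalBasis_apply_zero [FiniteDimensional ℝ E] (hE : Module.finrank ℝ E = 2)
    {x : E} (hx : ‖x‖ = 1) :
    ∃ B : OrthonormalBasis (Fin 2) ℝ E, B 0 = x := by
  have hv : Orthonormal ℝ (({0} : Set (Fin 2)).domRestrict fun _ => x) := by
    rw [orthonormal_iff_ite]
    rintro ⟨i, hi⟩ ⟨j, hj⟩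
    obtain rfl : i = 0 := hi
    obtain rfl : j = 0 := hj
    simp [hx]
  obtain ⟨B, hB⟩ := hv.exists_orthonormalBasis_extension_of_card_eq (by simpa using hE)
  exact ⟨B, hB 0 rfl⟩

lemma OrthonormalBasis.inner_smul_add_inner_smul (B : OrthonormalBasis (Fin 2) ℝ E) (x : E) :
    ⟪B 0, x⟫ • B 0 + ⟪B 1, x⟫ • B 1 = x := by
  simpa [Fin.sum_univ_two] using B.sum_repr' x

def orthonormalCoords (B : OrthonormalBasis (Fin 2) ℝ E) : E ≃L[ℝ] ℝ × ℝ :=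
  (B.repr.toContinuousLinearEquiv.trans (EuclideanSpace.equiv (Fin 2) ℝ)).trans
    (ContinuousLinearEquiv.finTwoArrow ℝ ℝ)

lemma orthonormalCoords_apply (B : OrthonormalBasis (Fin 2) ℝ E) (x : E) :
    orthonormalCoords B x = (⟪B 0, x⟫, ⟪B 1, x⟫) := by
  simp [orthonormalCoords, B.repr_apply_apply]

lemma volume_image_orthonormalCoords [FiniteDimensional ℝ E] [MeasurableSpace E] [BorelSpace E]
    (B : OrthonormalBasis (Fin 2) ℝ E) (X : Set E) :
    volume (orthonormalCoords B '' X) = volume X := by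
  have hB : MeasurePreserving (orthonormalCoords B) := (volume_preserving_finTwoArrow ℝ).comp
    ((PiLp.volume_preserving_ofLp (Fin 2)).comp B.measurePreserving_repr)
  rw [← hB.measure_preimage_emb (orthonormalCoords B).toHomeomorph.measurableEmbedding,
    preimage_image_eq _ (orthonormalCoords B).injective]

end Coordinates

section Polygon

variable {m : ℕ} {u : Fin m → V2} {b : Fin m → ℝ} {i : Fin m}

lemma convex_polyP : Convex ℝ (polyP u b) := by
  simp only [polyP, ofPred_forall]
  exact convex_iInter fun k => convex_halfSpace_le (innerₛₗ ℝ (u k)).isLinear _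

lemma isClosed_polyP : IsClosed (polyP u b) := by
  simp only [polyP, ofPred_forall]
  exact isClosed_iInter fun k => isClosed_le (by fun_prop) continuous_const

lemma inner_mul_inner_le_of_mem_SqIdx (hi : i ∈ SqIdx u) {B : OrthonormalBasis (Fin 2) ℝ V2}
    (hB : B 0 = u i) {j k : Fin m} (hj : ⟪B 1, u j⟫ < 0) (hk : 0 < ⟪B 1, u k⟫) :
    ⟪B 0, u k⟫ * ⟪B 1, u j⟫ ≤ ⟪B 0, u j⟫ * ⟪B 1, u k⟫ := by
  by_contra! hlt
  set aj := ⟪B 0, u j⟫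
  set sj := ⟪B 1, u j⟫
  set ak := ⟪B 0, u k⟫
  set sk := ⟪B 1, u k⟫
  have huj : aj • B 0 + sj • B 1 = u j := B.inner_smul_add_inner_smul (u j)
  have huk : ak • B 0 + sk • B 1 = u k := B.inner_smul_add_inner_smul (u k)
  set D := ak * sj - aj * sk with hD_def
  have hD : 0 < D := sub_pos.2 hlt
  have hspan : Submodule.span ℝ {u i, u k} = ⊤ := by
    refine eq_top_iff.2 fun x _ => Submodule.mem_span_pair.2
      ⟨⟪B 0, x⟫ - ⟪B 1, x⟫ * ak / sk, ⟪B 1, x⟫ / sk, ?_⟩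
    rw [← hB, ← huk]
    conv_rhs => rw [← B.inner_smul_add_inner_smul x]
    match_scalars
    · field_simp
      ring
    · field_simp
  -- otherwise `u i + (-sj / D) • u k + (sk / D) • u j = 0` with `sk, -sj, D > 0`
  refine hi ⟨k, j, pos_eq_univ_of_add_smul_add_smul_eq_zero (div_pos (neg_pos.2 hj) hD)
    (div_pos hk hD).le ?_ hspan⟩
  rw [← hB, ← huk, ← huj]
  match_scalars <;> field_simp <;> linear_combination -hD_def

lemma exists_inner_eq_one_forall_inner_nonneg (hu : ‖u i‖ = 1) (hi : i ∈ SqIdx u) :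
    ∃ v : V2, ⟪u i, v⟫ = 1 ∧ ∀ k, 0 ≤ ⟪u k, v⟫ ∨ ∃ r < (0 : ℝ), u k = r • u i := by
  obtain ⟨B, hB⟩ := exists_orthonormalBasis_apply_zero (by simp) hu
  obtain ⟨c, hc⟩ := exists_forall_mul_le (a := fun k => ⟪B 0, u k⟫)
    (s := fun k => ⟪B 1, u k⟫) fun j k => inner_mul_inner_le_of_mem_SqIdx hi hB
  have hv : ∀ x, ⟪x, B 0 - c • B 1⟫ = ⟪B 0, x⟫ - ⟪B 1, x⟫ * c := fun x => by
    rw [inner_sub_right, real_inner_smul_right, real_inner_comm (B 0), real_inner_comm (B 1)]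
    ring
  refine ⟨B 0 - c • B 1, by simp [← hB, hv, B.orthonormal.1 0], fun k => ?_⟩
  rw [hv]
  by_cases hs : ⟪B 1, u k⟫ = 0
  · by_cases ha : 0 ≤ ⟪B 0, u k⟫
    · exact Or.inl (by simpa [hs] using ha)
    · refine Or.inr ⟨_, not_le.1 ha, ?_⟩
      conv_lhs => rw [← B.inner_smul_add_inner_smul (u k)]
      rw [hs, zero_smul, add_zero, hB]
  · exact Or.inl (by linarith [hc k hs])

lemma sub_smul_mem_polyP (hb : ∀ k, 0 ≤ b k) {v : V2} (hvi : ⟪u i, v⟫ = 1)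
    (hv : ∀ k, 0 ≤ ⟪u k, v⟫ ∨ ∃ r < (0 : ℝ), u k = r • u i) {x : V2} (hx : x ∈ faceF u b i)
    {d : ℝ} (hd : d ∈ Icc 0 (b i)) : x - d • v ∈ polyP u b := by
  intro k
  rw [inner_sub_right, real_inner_smul_right]
  rcases hv k with hk | ⟨r, hr, hk⟩
  · nlinarith [hx.1 k, hd.1]
  · rw [hk, real_inner_smul_left, real_inner_smul_left, hx.2, hvi]
    nlinarith [hb k, hd.2]

lemma two_mul_volume_convexHull_insert_zero_faceF_le (hu : ‖u i‖ = 1) (hi : i ∈ SqIdx u)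
    (hb : ∀ k, 0 ≤ b k) :
    2 * volume (convexHull ℝ (insert 0 (faceF u b i))) ≤ volume (polyP u b) := by
  obtain ⟨v, hvi, hv⟩ := exists_inner_eq_one_forall_inner_nonneg hu hi
  obtain ⟨B, hB⟩ := exists_orthonormalBasis_apply_zero (by simp) hu
  set e := orthonormalCoords B
  have he1 : ∀ x, (e x).1 = ⟪u i, x⟫ := fun x => by rw [orthonormalCoords_apply, hB]
  have hface : e '' faceF u b i = {z ∈ e '' polyP u b | z.1 = b i} := by
    ext z
    constructor
    · rintro ⟨x, ⟨hxP, hxi⟩, rfl⟩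
      exact ⟨⟨x, hxP, rfl⟩, (he1 x).trans hxi⟩
    · rintro ⟨⟨x, hxP, rfl⟩, hz⟩
      exact ⟨x, ⟨hxP, (he1 x).symm.trans hz⟩, rfl⟩
  have hcone : e '' convexHull ℝ (insert 0 (faceF u b i)) =
      convexHull ℝ (insert 0 {z ∈ e '' polyP u b | z.1 = b i}) := by
    rw [← hface, ← map_zero e, ← image_insert_eq]
    exact e.toLinearMap.image_convexHull _
  rw [← volume_image_orthonormalCoords B, ← volume_image_orthonormalCoords B (polyP u b), hcone]
  refine two_mul_volume_convexHull_insert_zero_le_of_forall_sub_smul_mem (A := e '' polyP u b)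
    ?_ (convex_polyP.linear_image e.toLinearMap) (hb i) ⟪B 1, v⟫ ?_
  · exact (e.toHomeomorph.isClosedMap _ isClosed_polyP).measurableSet
  rintro _ ⟨x, hx, rfl⟩ hxi d hd
  refine ⟨x - d • v, sub_smul_mem_polyP hb hvi hv ⟨hx, (he1 x).symm.trans hxi⟩ hd, ?_⟩
  rw [map_sub, map_smul, orthonormalCoords_apply B v, hB, hvi]

end Polygon

theorem stmt13_general (m : ℕ) (u : Fin m → V2)
    (hunit : ∀ k, ‖u k‖ = 1)
    (i : Fin m) (hi : i ∈ SqIdx u) :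
    ∀ γ ∈ Ccv u, γ i ≤ 1 / 2 := by
  rintro γ ⟨b, hb, hvol, rfl⟩
  have hP : volume (polyP u b) = 1 := (ENNReal.toReal_eq_one_iff _).1 hvol
  have h := two_mul_volume_convexHull_insert_zero_faceF_le (hunit i) hi hb
  rw [hP] at h
  have h2 := ENNReal.toReal_mono ENNReal.one_ne_top h
  rw [ENNReal.toReal_mul, ENNReal.toReal_ofNat, ENNReal.toReal_one] at h2
  simp only [cv]
  linarith

/-- If `uᵢ ∈ U_□`, then every cone-volume vector `γ ∈ C_cv(U)` satisfies `γᵢ ≤ 1/2`. -/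
theorem stmt13 (m : ℕ) (u : Fin m → V2)
    (hunit : ∀ k, ‖u k‖ = 1) (hinj : Function.Injective u)
    (hpos : pos (Set.range u) = Set.univ)
    (i : Fin m) (hi : i ∈ SqIdx u) :
    ∀ γ ∈ Ccv u, γ i ≤ 1 / 2 :=
  stmt13_general m u hunit i hi
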